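/- arXiv:2004.02499 — 3 statements merged into one kernel-verified Lean document; each statement's English description precedes it below -/
import Mathlib

section
/- Let G₁ be d₁-regular on n₁ vertices and G₂ be d₂-regular on n₂ vertices, and let G = G₁ ∇ G₂ be their join. Then the characteristic polynomial of the signless Laplacian Q = A + D of G satisfies: φ(Q, x) = [φ(Q₁, x − n₂) · φ(Q₂, x − n₁) / ((x − n₂ − 2d₁)(x − n₁ − 2d₂))] · [(x − n₂ − 2d₁)(x − n₁ − 2d₂) − n₁n₂], where Qᵢ is the signless Laplacian of Gᵢ. -/
open Matrix BigOperators

lemma vmv_mul {m n p : Type*} [Fintype n] (a : m → ℝ) (b : n → ℝ) (M : Matrix n p ℝ) :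
    Matrix.vecMulVec a b * M = Matrix.vecMulVec a (b ᵥ* M) := by
  ext i j
  simp [Matrix.mul_apply, Matrix.vecMulVec_apply, Matrix.vecMul, dotProduct,
    Finset.mul_sum, mul_assoc]

lemma mul_vmv {m n p : Type*} [Fintype n] (M : Matrix m n ℝ) (a : n → ℝ) (b : p → ℝ) :
    M * Matrix.vecMulVec a b = Matrix.vecMulVec (M *ᵥ a) b := by
  ext i j
  simp [Matrix.mul_apply, Matrix.vecMulVec_apply, Matrix.mulVec, dotProduct,
    Finset.sum_mul, mul_assoc]

lemma vmv_smul_left {m n : Type*} (c : ℝ) (a : m → ℝ) (b : n → ℝ) :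
    Matrix.vecMulVec (c • a) b = c • Matrix.vecMulVec a b := by
  ext i j; simp [Matrix.vecMulVec_apply, mul_assoc]

lemma vmv_smul_right {m n : Type*} (c : ℝ) (a : m → ℝ) (b : n → ℝ) :
    Matrix.vecMulVec a (c • b) = c • Matrix.vecMulVec a b := by
  ext i j; simp [Matrix.vecMulVec_apply]; ring

lemma colsum {n d : ℕ} (G : SimpleGraph (Fin n)) [DecidableRel G.Adj]
    (h : G.IsRegularOfDegree d) (c : ℝ) :
    (c • (1 : Matrix (Fin n) (Fin n) ℝ) - (G.adjMatrix ℝ + (d : ℝ) • 1)) *ᵥ (fun _ => (1 : ℝ))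
      = (c - 2 * d) • fun _ => (1 : ℝ) := by
  ext i
  simp [Matrix.sub_mulVec, Matrix.add_mulVec, Matrix.smul_mulVec, Matrix.one_mulVec,
    h i]
  ring

lemma rowsum {n d : ℕ} (G : SimpleGraph (Fin n)) [DecidableRel G.Adj]
    (h : G.IsRegularOfDegree d) (c : ℝ) :
    (fun _ => (1 : ℝ)) ᵥ* (c • (1 : Matrix (Fin n) (Fin n) ℝ) - (G.adjMatrix ℝ + (d : ℝ) • 1))
      = (c - 2 * d) • fun _ => (1 : ℝ) := by
  have ht : (c • (1 : Matrix (Fin n) (Fin n) ℝ) - (G.adjMatrix ℝ + (d : ℝ) • 1))ᵀ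
      = c • (1 : Matrix (Fin n) (Fin n) ℝ) - (G.adjMatrix ℝ + (d : ℝ) • 1) := by
    simp [Matrix.transpose_sub, Matrix.transpose_add, Matrix.transpose_smul]
  rw [← Matrix.mulVec_transpose, ht, colsum G h]

/-- For the join `G = G₁ ∇ G₂` of a `d₁`-regular graph on `n₁` vertices and a
`d₂`-regular graph on `n₂` vertices, the signless Laplacian `Q = A + D` of `G` satisfies
`φ(Q, x)·(x − n₂ − 2d₁)(x − n₁ − 2d₂)
  = φ(Q₁, x − n₂)·φ(Q₂, x − n₁)·[(x − n₂ − 2d₁)(x − n₁ − 2d₂) − n₁n₂]`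
for all real `x` (the identity with denominators cleared). -/
theorem stmt4 {n₁ n₂ : ℕ}
    (G₁ : SimpleGraph (Fin n₁)) [DecidableRel G₁.Adj]
    (G₂ : SimpleGraph (Fin n₂)) [DecidableRel G₂.Adj]
    (d₁ d₂ : ℕ) (hreg₁ : G₁.IsRegularOfDegree d₁) (hreg₂ : G₂.IsRegularOfDegree d₂)
    (A₁ : Matrix (Fin n₁) (Fin n₁) ℝ) (hA₁ : A₁ = G₁.adjMatrix ℝ)
    (A₂ : Matrix (Fin n₂) (Fin n₂) ℝ) (hA₂ : A₂ = G₂.adjMatrix ℝ)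
    (Q₁ : Matrix (Fin n₁) (Fin n₁) ℝ) (hQ₁ : Q₁ = A₁ + (d₁ : ℝ) • 1)
    (Q₂ : Matrix (Fin n₂) (Fin n₂) ℝ) (hQ₂ : Q₂ = A₂ + (d₂ : ℝ) • 1)
    (A D Q : Matrix (Fin n₁ ⊕ Fin n₂) (Fin n₁ ⊕ Fin n₂) ℝ)
    (hA : A = Matrix.fromBlocks A₁ (Matrix.of fun _ _ => (1 : ℝ))
      (Matrix.of fun _ _ => (1 : ℝ)) A₂)
    (hD : D = Matrix.fromBlocks (((d₁ : ℝ) + n₂) • 1) 0 0 (((d₂ : ℝ) + n₁) • 1))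
    (hQ : Q = A + D) :
    ∀ x : ℝ,
      (x • (1 : Matrix (Fin n₁ ⊕ Fin n₂) (Fin n₁ ⊕ Fin n₂) ℝ) - Q).det *
          ((x - n₂ - 2 * d₁) * (x - n₁ - 2 * d₂)) =
        ((x - n₂) • (1 : Matrix (Fin n₁) (Fin n₁) ℝ) - Q₁).det *
          ((x - n₁) • (1 : Matrix (Fin n₂) (Fin n₂) ℝ) - Q₂).det *
          ((x - n₂ - 2 * d₁) * (x - n₁ - 2 * d₂) - n₁ * n₂) := by
  subst hQ hA hD hQ₁ hQ₂ hA₁ hA₂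
  intro x
  set a : ℝ := x - n₂ - 2 * d₁ with ha
  set b : ℝ := x - n₁ - 2 * d₂ with hb
  set u : Fin n₁ → ℝ := fun _ => 1 with hu
  set v : Fin n₂ → ℝ := fun _ => 1 with hv
  set M₁ : Matrix (Fin n₁) (Fin n₁) ℝ :=
    (x - n₂) • 1 - (G₁.adjMatrix ℝ + (d₁ : ℝ) • 1) with hM₁
  set M₂ : Matrix (Fin n₂) (Fin n₂) ℝ :=
    (x - n₁) • 1 - (G₂.adjMatrix ℝ + (d₂ : ℝ) • 1) with hM₂
  have hrow₁ : u ᵥ* M₁ = a • u := by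
    rw [hM₁, hu, rowsum G₁ hreg₁]
  have hcol₂ : M₂ *ᵥ v = b • v := by
    rw [hM₂, hv, colsum G₂ hreg₂]
  -- the big matrix as a block matrix
  have hN : x • (1 : Matrix (Fin n₁ ⊕ Fin n₂) (Fin n₁ ⊕ Fin n₂) ℝ) -
      (Matrix.fromBlocks (G₁.adjMatrix ℝ) (Matrix.of fun _ _ => (1 : ℝ))
        (Matrix.of fun _ _ => (1 : ℝ)) (G₂.adjMatrix ℝ) +
       Matrix.fromBlocks (((d₁ : ℝ) + n₂) • 1) 0 0 (((d₂ : ℝ) + n₁) • 1)) =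
      Matrix.fromBlocks M₁ (-Matrix.vecMulVec u v) (-Matrix.vecMulVec v u) M₂ := by
    ext i j
    rcases i with i | i <;> rcases j with j | j <;>
      simp [Matrix.fromBlocks, Matrix.vecMulVec_apply, hM₁, hM₂, hu, hv,
        Matrix.one_apply, Matrix.sub_apply, Matrix.add_apply, Matrix.smul_apply] <;>
      by_cases h : i = j <;> simp [h] <;> ring
  rw [hN]
  rcases eq_or_ne a 0 with ha0 | ha0
  · rcases Nat.eq_zero_or_pos n₁ with h0 | h0
    · have hz : (n₁ : ℝ) * n₂ = 0 := by rw [h0]; simp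
      rw [ha0, hz]; ring
    · have hdet0 : M₁.det = 0 := by
        have h1 : M₁ᵀ *ᵥ u = 0 := by
          rw [Matrix.mulVec_transpose, hrow₁, ha0, zero_smul]
        have hu0 : u ≠ 0 := by
          intro h
          have := congrFun h ⟨0, h0⟩
          simp [hu] at this
        have := Matrix.exists_mulVec_eq_zero_iff.mp ⟨u, hu0, h1⟩
        rwa [Matrix.det_transpose] at this
      rw [ha0, hdet0]; ring
  rcases eq_or_ne b 0 with hb0 | hb0
  · rcases Nat.eq_zero_or_pos n₂ with h0 | h0
    · have hz : (n₁ : ℝ) * n₂ = 0 := by rw [h0]; simp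
      rw [hb0, hz]; ring
    · have hdet0 : M₂.det = 0 := by
        have h1 : M₂ *ᵥ v = 0 := by rw [hcol₂, hb0, zero_smul]
        have hv0 : v ≠ 0 := by
          intro h
          have := congrFun h ⟨0, h0⟩
          simp [hv] at this
        exact Matrix.exists_mulVec_eq_zero_iff.mp ⟨v, hv0, h1⟩
      rw [hb0, hdet0]; ring
  -- main case
  set c : ℝ := (n₁ : ℝ) / a with hc
  set S : Matrix (Fin n₂) (Fin n₂) ℝ := M₂ - c • Matrix.vecMulVec v v with hS
  have huv : u ᵥ* Matrix.vecMulVec u v = (n₁ : ℝ) • v := by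
    ext j; simp [Matrix.vecMul, dotProduct, Matrix.vecMulVec_apply, hu, hv]
  have hdetN : (Matrix.fromBlocks M₁ (-Matrix.vecMulVec u v) (-Matrix.vecMulVec v u) M₂).det
      = M₁.det * S.det := by
    have hL : (Matrix.fromBlocks (1 : Matrix (Fin n₁) (Fin n₁) ℝ) 0
        ((1 / a) • Matrix.vecMulVec v u) (1 : Matrix (Fin n₂) (Fin n₂) ℝ)).det = 1 := by
      rw [Matrix.det_fromBlocks_zero₁₂]; simp
    have hLN : Matrix.fromBlocks (1 : Matrix (Fin n₁) (Fin n₁) ℝ) 0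
          ((1 / a) • Matrix.vecMulVec v u) (1 : Matrix (Fin n₂) (Fin n₂) ℝ) *
        Matrix.fromBlocks M₁ (-Matrix.vecMulVec u v) (-Matrix.vecMulVec v u) M₂ =
        Matrix.fromBlocks M₁ (-Matrix.vecMulVec u v) 0 S := by
      rw [Matrix.fromBlocks_multiply]
      have e21 : (1 / a) • Matrix.vecMulVec v u * M₁ +
          (1 : Matrix (Fin n₂) (Fin n₂) ℝ) * -Matrix.vecMulVec v u = 0 := by
        rw [Matrix.smul_mul, vmv_mul, hrow₁, vmv_smul_right, smul_smul,
          one_div, inv_mul_cancel₀ ha0, one_smul, Matrix.one_mul]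
        simp
      have e22 : (1 / a) • Matrix.vecMulVec v u * -Matrix.vecMulVec u v +
          (1 : Matrix (Fin n₂) (Fin n₂) ℝ) * M₂ = S := by
        rw [Matrix.mul_neg, Matrix.smul_mul, vmv_mul, huv, vmv_smul_right, smul_smul,
          Matrix.one_mul, hS, hc]
        rw [show 1 / a * (n₁ : ℝ) = (n₁ : ℝ) / a from by ring]
        abel
      rw [e21, e22]
      simp
    calc (Matrix.fromBlocks M₁ (-Matrix.vecMulVec u v) (-Matrix.vecMulVec v u) M₂).det
        = (Matrix.fromBlocks (1 : Matrix (Fin n₁) (Fin n₁) ℝ) 0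
            ((1 / a) • Matrix.vecMulVec v u) (1 : Matrix (Fin n₂) (Fin n₂) ℝ) *
          Matrix.fromBlocks M₁ (-Matrix.vecMulVec u v) (-Matrix.vecMulVec v u) M₂).det := by
          rw [Matrix.det_mul, hL, one_mul]
      _ = (Matrix.fromBlocks M₁ (-Matrix.vecMulVec u v) 0 S).det := by rw [hLN]
      _ = M₁.det * S.det := Matrix.det_fromBlocks_zero₂₁ _ _ _
  have hdetS : S.det = M₂.det * (1 - c * n₂ / b) := by
    set w : Unit → ℝ := fun _ => 1 with hw
    have hT : (Matrix.fromBlocks M₂ (Matrix.vecMulVec (c • v) w) (Matrix.vecMulVec w v)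
        (1 : Matrix Unit Unit ℝ)).det = S.det := by
      rw [Matrix.det_fromBlocks_one₂₂]
      congr 1
      rw [vmv_mul]
      have hwv : w ᵥ* Matrix.vecMulVec w v = v := by
        ext j; simp [Matrix.vecMul, dotProduct, Matrix.vecMulVec_apply, hw]
      rw [hwv, vmv_smul_left, hS]
    have hU : (Matrix.fromBlocks (1 : Matrix (Fin n₂) (Fin n₂) ℝ)
        ((-(c / b)) • Matrix.vecMulVec v w) 0 (1 : Matrix Unit Unit ℝ)).det = 1 := by
      rw [Matrix.det_fromBlocks_zero₂₁]; simp
    have hTU : Matrix.fromBlocks M₂ (Matrix.vecMulVec (c • v) w) (Matrix.vecMulVec w v)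
          (1 : Matrix Unit Unit ℝ) *
        Matrix.fromBlocks 1 ((-(c / b)) • Matrix.vecMulVec v w) 0 1 =
        Matrix.fromBlocks M₂ 0 (Matrix.vecMulVec w v)
          ((1 - c * n₂ / b) • (1 : Matrix Unit Unit ℝ)) := by
      rw [Matrix.fromBlocks_multiply]
      have e12 : M₂ * ((-(c / b)) • Matrix.vecMulVec v w) +
          Matrix.vecMulVec (c • v) w * (1 : Matrix Unit Unit ℝ) = 0 := by
        rw [Matrix.mul_smul, mul_vmv, hcol₂, vmv_smul_left, Matrix.mul_one, vmv_smul_left,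
          smul_smul]
        rw [show -(c / b) * b = -c from by field_simp]
        simp
      have e22 : Matrix.vecMulVec w v * ((-(c / b)) • Matrix.vecMulVec v w) +
          (1 : Matrix Unit Unit ℝ) * (1 : Matrix Unit Unit ℝ)
          = (1 - c * ↑n₂ / b) • (1 : Matrix Unit Unit ℝ) := by
        rw [Matrix.mul_smul, vmv_mul]
        have hvw : v ᵥ* Matrix.vecMulVec v w = (n₂ : ℝ) • w := by
          ext j; simp [Matrix.vecMul, dotProduct, Matrix.vecMulVec_apply, hv, hw]
        have hww : Matrix.vecMulVec w w = (1 : Matrix Unit Unit ℝ) := by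
          ext i j; simp [Matrix.vecMulVec_apply, hw, Matrix.one_apply]
        rw [hvw, vmv_smul_right, smul_smul, hww, Matrix.mul_one]
        ext i j
        simp [Matrix.add_apply, Matrix.smul_apply, Matrix.one_apply]
        ring
      rw [e12, e22]
      simp
    have hdetD' : ((1 - c * ↑n₂ / b) • (1 : Matrix Unit Unit ℝ)).det = 1 - c * n₂ / b := by
      rw [Matrix.det_unique]
      simp [Matrix.smul_apply, Matrix.one_apply]
    calc S.det = (Matrix.fromBlocks M₂ (Matrix.vecMulVec (c • v) w) (Matrix.vecMulVec w v)
          (1 : Matrix Unit Unit ℝ)).det := hT.symm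
      _ = (Matrix.fromBlocks M₂ (Matrix.vecMulVec (c • v) w) (Matrix.vecMulVec w v)
            (1 : Matrix Unit Unit ℝ) *
          Matrix.fromBlocks 1 ((-(c / b)) • Matrix.vecMulVec v w) 0 1).det := by
          rw [Matrix.det_mul, hU, mul_one]
      _ = (Matrix.fromBlocks M₂ 0 (Matrix.vecMulVec w v)
            ((1 - c * n₂ / b) • (1 : Matrix Unit Unit ℝ))).det := by rw [hTU]
      _ = M₂.det * (1 - c * n₂ / b) := by
          rw [Matrix.det_fromBlocks_zero₁₂, hdetD']
  rw [hdetN, hdetS, hc]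
  field_simp
end

section
/- Let M be a real symmetric n×n matrix in block-diagonal form with blocks M₁ (size n₁) and M₂ (size n₂), where Mᵢ𝟙 = μᵢ𝟙 (constant row sums μᵢ). Then for any real γ, det(xI − M − γJ) · (x − μ₁)(x − μ₂) = det(xI − M₁) · det(xI − M₂) · [(x − μ₁ − γn₁)(x − μ₂ − γn₂) − γ²n₁n₂]. -/
open Matrix

/-!
Write `A = x • 1 - M`. If `A *ᵥ w = 𝟙`, then `A - γ • J = A * (1 - γ • w 𝟙ᵀ)`, so the rank-one
determinant lemma gives `det (A - γ • J) = det A * (1 - γ * ∑ w)`. For `x ≠ μ₁, μ₂` the row-sum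
hypotheses provide `w`, equal to `(x - μᵢ)⁻¹` on block `i`, and clearing denominators gives the
identity. At `x = μᵢ` both sides vanish: `𝟙` lies in the kernel of `μᵢ • 1 - Mᵢ` unless block `i`
is empty, in which case the factor `nᵢ = 0` kills the right-hand side.
-/

namespace Matrix

section Blocks

variable {m n R : Type*} [DecidableEq m] [DecidableEq n] [CommRing R]

theorem smul_one_sub_fromBlocks_diagonal (x : R) (A : Matrix m m R) (D : Matrix n n R) :
    x • 1 - fromBlocks A 0 0 D = fromBlocks (x • 1 - A) 0 0 (x • 1 - D) := by
  rw [← fromBlocks_one, fromBlocks_smul, sub_eq_add_neg, fromBlocks_neg, fromBlocks_add]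
  simp [sub_eq_add_neg]

end Blocks

section RowSums

variable {m R : Type*} [Fintype m] [DecidableEq m] [CommRing R]

theorem det_sub_vecMulVec_of_mulVec_eq {A : Matrix m m R} {u v w : m → R} (h : A *ᵥ w = u) :
    (A - vecMulVec u v).det = A.det * (1 - v ⬝ᵥ w) := by
  have hfactor : A - vecMulVec u v = A * (1 + replicateCol Unit (-w) * replicateRow Unit v) := by
    rw [← vecMulVec_eq, Matrix.mul_add, Matrix.mul_one, mul_vecMulVec, mulVec_neg, h,
      neg_vecMulVec, sub_eq_add_neg]
  rw [hfactor, det_mul, det_one_add_replicateCol_mul_replicateRow, dotProduct_neg,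
    sub_eq_add_neg]

theorem det_eq_zero_of_mulVec_const_eq_zero [Nonempty m] {A : Matrix m m R}
    (h : A *ᵥ (fun _ => 1) = 0) : A.det = 0 := by
  have := congrFun (congrArg (adjugate A *ᵥ ·) h) (Classical.arbitrary m)
  simpa [mulVec_mulVec, adjugate_mul, smul_mulVec] using this

theorem det_smul_one_sub_mul_card_eq_zero {M : Matrix m m R} {μ : R}
    (hM : M *ᵥ (fun _ => 1) = μ • fun _ => 1) : (μ • 1 - M).det * Fintype.card m = 0 := by
  cases isEmpty_or_nonempty m with
  | inl _ => simp
  | inr _ =>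
    rw [det_eq_zero_of_mulVec_const_eq_zero (by rw [sub_mulVec, hM, smul_mulVec, one_mulVec,
      sub_self]), zero_mul]

theorem smul_one_sub_mulVec_const {M : Matrix m m R} {μ : R}
    (hM : M *ᵥ (fun _ => 1) = μ • fun _ => 1) (x c : R) :
    (x • 1 - M) *ᵥ (fun _ => c) = fun _ => (x - μ) * c := by
  have hc : (fun _ : m => c) = c • fun _ => 1 := by ext; simp
  rw [hc, mulVec_smul, sub_mulVec, hM, smul_mulVec, one_mulVec]
  ext
  simp only [Pi.smul_apply, Pi.sub_apply, smul_eq_mul, mul_one]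
  ring

end RowSums

theorem det_smul_one_sub_fromBlocks_sub_smul_ones
    {m n K : Type*} [Fintype m] [DecidableEq m] [Fintype n] [DecidableEq n] [Field K]
    {M₁ : Matrix m m K} {M₂ : Matrix n n K} {μ₁ μ₂ : K}
    (hrow₁ : M₁ *ᵥ (fun _ => 1) = μ₁ • fun _ => 1) (hrow₂ : M₂ *ᵥ (fun _ => 1) = μ₂ • fun _ => 1)
    {x : K} (h₁ : x - μ₁ ≠ 0) (h₂ : x - μ₂ ≠ 0) (γ : K) :
    (x • 1 - fromBlocks M₁ 0 0 M₂ - γ • of fun _ _ => 1).det =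
      (x • 1 - M₁).det * (x • 1 - M₂).det *
        (1 - γ * (Fintype.card m / (x - μ₁) + Fintype.card n / (x - μ₂))) := by
  have hw : (x • 1 - fromBlocks M₁ 0 0 M₂) *ᵥ Sum.elim (fun _ => (x - μ₁)⁻¹) (fun _ => (x - μ₂)⁻¹)
      = fun _ => 1 := by
    rw [smul_one_sub_fromBlocks_diagonal, fromBlocks_mulVec]
    ext (i | i) <;>
      simp [smul_one_sub_mulVec_const hrow₁, smul_one_sub_mulVec_const hrow₂, h₁, h₂]
  have hJ : (γ • of fun _ _ => 1 : Matrix (m ⊕ n) (m ⊕ n) K) =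
      vecMulVec (fun _ => 1) (γ • fun _ => 1) := by
    ext
    simp [vecMulVec_apply]
  have hsum : (γ • fun _ => 1) ⬝ᵥ Sum.elim (fun _ : m => (x - μ₁)⁻¹) (fun _ : n => (x - μ₂)⁻¹) =
      γ * (Fintype.card m / (x - μ₁) + Fintype.card n / (x - μ₂)) := by
    simp only [dotProduct, Pi.smul_apply, smul_eq_mul, mul_one, Fintype.sum_sum_type,
      Sum.elim_inl, Sum.elim_inr, Finset.sum_const, Finset.card_univ, nsmul_eq_mul, div_eq_mul_inv]
    ring
  rw [hJ, det_sub_vecMulVec_of_mulVec_eq hw, smul_one_sub_fromBlocks_diagonal,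
    det_fromBlocks_zero₂₁, hsum]

end Matrix

theorem stmt5_general {n₁ n₂ : ℕ}
    (M₁ : Matrix (Fin n₁) (Fin n₁) ℝ)
    (M₂ : Matrix (Fin n₂) (Fin n₂) ℝ)
    (μ₁ μ₂ γ : ℝ)
    (hrow₁ : M₁ *ᵥ (fun _ => (1 : ℝ)) = μ₁ • (fun _ => (1 : ℝ)))
    (hrow₂ : M₂ *ᵥ (fun _ => (1 : ℝ)) = μ₂ • (fun _ => (1 : ℝ)))
    (M J : Matrix (Fin n₁ ⊕ Fin n₂) (Fin n₁ ⊕ Fin n₂) ℝ)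
    (hM : M = Matrix.fromBlocks M₁ 0 0 M₂)
    (hJ : J = Matrix.of fun _ _ => (1 : ℝ)) :
    ∀ x : ℝ,
      (x • (1 : Matrix (Fin n₁ ⊕ Fin n₂) (Fin n₁ ⊕ Fin n₂) ℝ) - M - γ • J).det *
          ((x - μ₁) * (x - μ₂)) =
        (x • (1 : Matrix (Fin n₁) (Fin n₁) ℝ) - M₁).det *
          (x • (1 : Matrix (Fin n₂) (Fin n₂) ℝ) - M₂).det *
          ((x - μ₁ - γ * n₁) * (x - μ₂ - γ * n₂) - γ ^ 2 * n₁ * n₂) := by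
  subst hM hJ
  intro x
  by_cases h₁ : x = μ₁
  · subst h₁
    have hvanish := det_smul_one_sub_mul_card_eq_zero hrow₁
    rw [Fintype.card_fin] at hvanish
    linear_combination (x • (1 : Matrix (Fin n₂) (Fin n₂) ℝ) - M₂).det * γ * (x - μ₂) * hvanish
  by_cases h₂ : x = μ₂
  · subst h₂
    have hvanish := det_smul_one_sub_mul_card_eq_zero hrow₂
    rw [Fintype.card_fin] at hvanish
    linear_combination (x • (1 : Matrix (Fin n₁) (Fin n₁) ℝ) - M₁).det * γ * (x - μ₁) * hvanish
  have h₁' : x - μ₁ ≠ 0 := sub_ne_zero.mpr h₁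
  have h₂' : x - μ₂ ≠ 0 := sub_ne_zero.mpr h₂
  rw [det_smul_one_sub_fromBlocks_sub_smul_ones hrow₁ hrow₂ h₁' h₂', Fintype.card_fin,
    Fintype.card_fin]
  field_simp
  ring

/-- For `M = diag(M₁, M₂)` block diagonal with real symmetric blocks having
constant row sums `μ₁, μ₂`, and any real `γ`,
`det(xI − M − γJ)·(x − μ₁)(x − μ₂)
  = det(xI − M₁)·det(xI − M₂)·[(x − μ₁ − γn₁)(x − μ₂ − γn₂) − γ²n₁n₂]`. -/
theorem stmt5 {n₁ n₂ : ℕ}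
    (M₁ : Matrix (Fin n₁) (Fin n₁) ℝ) (hsymm₁ : M₁.IsSymm)
    (M₂ : Matrix (Fin n₂) (Fin n₂) ℝ) (hsymm₂ : M₂.IsSymm)
    (μ₁ μ₂ γ : ℝ)
    (hrow₁ : M₁ *ᵥ (fun _ => (1 : ℝ)) = μ₁ • (fun _ => (1 : ℝ)))
    (hrow₂ : M₂ *ᵥ (fun _ => (1 : ℝ)) = μ₂ • (fun _ => (1 : ℝ)))
    (M J : Matrix (Fin n₁ ⊕ Fin n₂) (Fin n₁ ⊕ Fin n₂) ℝ)
    (hM : M = Matrix.fromBlocks M₁ 0 0 M₂)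
    (hJ : J = Matrix.of fun _ _ => (1 : ℝ)) :
    ∀ x : ℝ,
      (x • (1 : Matrix (Fin n₁ ⊕ Fin n₂) (Fin n₁ ⊕ Fin n₂) ℝ) - M - γ • J).det *
          ((x - μ₁) * (x - μ₂)) =
        (x • (1 : Matrix (Fin n₁) (Fin n₁) ℝ) - M₁).det *
          (x • (1 : Matrix (Fin n₂) (Fin n₂) ℝ) - M₂).det *
          ((x - μ₁ - γ * n₁) * (x - μ₂ - γ * n₂) - γ ^ 2 * n₁ * n₂) :=
  stmt5_general M₁ M₂ μ₁ μ₂ γ hrow₁ hrow₂ M J hM hJ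
end

section
/- Let M₁, ..., M_k be real symmetric matrices of sizes n₁, ..., n_k with constant row sums μ₁, ..., μ_k, let M = diag(M₁, ..., M_k), n = Σnᵢ, and let γ ∈ ℝ. Then det(xI − M − γJ) · ∏ᵢ(x − μᵢ) = ∏ᵢ det(xI − Mᵢ) · det(C), where C is the k×k matrix with C_{ii} = x − μᵢ − γnᵢ and C_{ij} = −γnⱼ for i ≠ j. -/
/-!
Write `A = xI − M`, `D = diag(x − μᵢ)` and `cᵢ = −γ / (x − μᵢ)`. Because the blocks have constant
row sums, the vector equal to `cᵢ` on block `i` solves `A w = −γ𝟙`, and likewise `D c = −γ𝟙`.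
The matrix determinant lemma in the form `det (A + u vᵀ) = det A · (1 + vᵀ w)` whenever `A w = u`
then turns both sides into `det A · ∏ᵢ (x − μᵢ) · (1 + ∑ᵢ nᵢ cᵢ)`. This only makes sense for
`x` off the finitely many `μᵢ`; both sides are continuous in `x`, so the identity holds for all `x`.
-/

namespace Matrix

theorem det_add_replicateCol_mul_replicateRow_of_mulVec_eq {n R : Type*} [Fintype n]
    [DecidableEq n] [CommRing R] {A : Matrix n n R} {u w : n → R} (h : A *ᵥ w = u) (v : n → R) :
    (A + replicateCol Unit u * replicateRow Unit v).det = A.det * (1 + v ⬝ᵥ w) := by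
  have : A + replicateCol Unit u * replicateRow Unit v =
      A * (1 + replicateCol Unit w * replicateRow Unit v) := by
    rw [Matrix.mul_add, Matrix.mul_one, ← Matrix.mul_assoc, ← replicateCol_mulVec, h]
  rw [this, det_mul, det_one_add_replicateCol_mul_replicateRow]

variable {ι : Type*} [Fintype ι] [DecidableEq ι] {m : ι → Type*} [∀ i, Fintype (m i)]

theorem blockDiagonal'_mulVec_sigma_fst {R : Type*} [CommRing R]
    {M : ∀ i, Matrix (m i) (m i) R} {μ : ι → R}
    (hrow : ∀ i, M i *ᵥ (fun _ => 1) = μ i • (fun _ => 1)) (c : ι → R) :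
    blockDiagonal' M *ᵥ (fun p => c p.1) = fun p => μ p.1 * c p.1 := by
  ext ⟨i, a⟩
  have hi : (M i *ᵥ fun _ => c i) a = μ i * c i := by
    have := congrFun (hrow i) a
    simp_all [mulVec, dotProduct, ← Finset.sum_mul]
  rw [← hi, mulVec, dotProduct, ← Finset.univ_sigma_univ, Finset.sum_sigma,
    Finset.sum_eq_single i]
  · simp [mulVec, dotProduct]
  · intro j _ hj
    exact Finset.sum_eq_zero fun b _ => by rw [blockDiagonal'_apply_ne M a b (Ne.symm hj), zero_mul]
  · simp

variable [∀ i, DecidableEq (m i)]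

theorem det_blockDiagonal' {R : Type*} [CommRing R] (M : ∀ i, Matrix (m i) (m i) R) :
    (blockDiagonal' M).det = ∏ i, (M i).det := by
  let : LinearOrder ι := LinearOrder.lift' _ (Fintype.equivFin ι).injective
  rw [(blockTriangular_blockDiagonal' M).det_fintype]
  refine Finset.prod_congr rfl fun i _ => ?_
  rw [← det_submatrix_equiv_self (Equiv.sigmaSubtype i).symm]
  congr 1
  ext a b
  simp [toSquareBlock, toSquareBlockProp, Equiv.sigmaSubtype]

theorem det_smul_one_sub_blockDiagonal'_sub_smul_ones_mul_prod {K : Type*} [Field K]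
    {M : ∀ i, Matrix (m i) (m i) K} {μ : ι → K}
    (hrow : ∀ i, M i *ᵥ (fun _ => 1) = μ i • (fun _ => 1)) (γ : K) {x : K}
    (hx : ∀ i, x ≠ μ i) :
    (x • (1 : Matrix (Σ i, m i) (Σ i, m i) K) - blockDiagonal' M - γ • of fun _ _ => 1).det *
        ∏ i, (x - μ i) =
      (∏ i, (x • (1 : Matrix (m i) (m i) K) - M i).det) *
        (of fun i j : ι => if i = j then x - μ i - γ * Fintype.card (m i)
          else -γ * Fintype.card (m j)).det := by
  set c : ι → K := fun i => -γ / (x - μ i)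
  have hA : x • (1 : Matrix (Σ i, m i) (Σ i, m i) K) - blockDiagonal' M =
      blockDiagonal' fun i => x • 1 - M i := by
    rw [← blockDiagonal'_one, ← blockDiagonal'_smul, ← blockDiagonal'_sub]
    rfl
  have hAc : (x • (1 : Matrix (Σ i, m i) (Σ i, m i) K) - blockDiagonal' M) *ᵥ (fun p => c p.1) =
      fun _ => -γ := by
    ext p
    rw [sub_mulVec, smul_mulVec, one_mulVec, blockDiagonal'_mulVec_sigma_fst hrow]
    have := sub_ne_zero.2 (hx p.1)
    simp only [Pi.sub_apply, Pi.smul_apply, smul_eq_mul, c]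
    field_simp
    ring
  have hDc : diagonal (fun i => x - μ i) *ᵥ c = fun _ => -γ := by
    ext i
    rw [mulVec_diagonal]
    exact mul_div_cancel₀ _ (sub_ne_zero.2 (hx i))
  have hLHS : x • (1 : Matrix (Σ i, m i) (Σ i, m i) K) - blockDiagonal' M - γ • of (fun _ _ => 1) =
      (x • 1 - blockDiagonal' M) +
        replicateCol Unit (fun _ => -γ) * replicateRow Unit (fun _ : Σ i, m i => (1 : K)) := by
    ext
    simp [sub_eq_add_neg, mul_apply]
  have hC : (of fun i j : ι => if i = j then x - μ i - γ * Fintype.card (m i)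
        else -γ * Fintype.card (m j)) =
      diagonal (fun i => x - μ i) +
        replicateCol Unit (fun _ => -γ) * replicateRow Unit (fun j => (Fintype.card (m j) : K)) := by
    ext i j
    by_cases h : i = j <;> simp [diagonal, h, sub_eq_add_neg, mul_apply]
  have hsum : (fun _ => 1) ⬝ᵥ (fun p : Σ i, m i => c p.1) =
      (fun j => (Fintype.card (m j) : K)) ⬝ᵥ c := by
    simp [dotProduct, ← Finset.univ_sigma_univ, Finset.sum_sigma]
  rw [hLHS, hC, det_add_replicateCol_mul_replicateRow_of_mulVec_eq hAc,
    det_add_replicateCol_mul_replicateRow_of_mulVec_eq hDc, hsum, det_diagonal, hA,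
    det_blockDiagonal']
  ring

end Matrix

open Matrix

theorem stmt10_general {k : ℕ} (nn : Fin k → ℕ)
    (M : ∀ i, Matrix (Fin (nn i)) (Fin (nn i)) ℝ)
    (μ : Fin k → ℝ) (γ : ℝ)
    (hrow : ∀ i, (M i) *ᵥ (fun _ => (1 : ℝ)) = μ i • (fun _ => (1 : ℝ)))
    (Mbd J : Matrix ((i : Fin k) × Fin (nn i)) ((i : Fin k) × Fin (nn i)) ℝ)
    (hMbd : Mbd = Matrix.blockDiagonal' M)
    (hJ : J = Matrix.of fun _ _ => (1 : ℝ)) :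
    ∀ x : ℝ,
      (x • (1 : Matrix ((i : Fin k) × Fin (nn i)) ((i : Fin k) × Fin (nn i)) ℝ) - Mbd - γ • J).det *
          ∏ i, (x - μ i) =
        (∏ i, (x • (1 : Matrix (Fin (nn i)) (Fin (nn i)) ℝ) - M i).det) *
          (Matrix.of fun i j : Fin k =>
            if i = j then x - μ i - γ * nn i else -γ * nn j).det := by
  subst hMbd hJ
  apply funext_iff.mp
  refine Continuous.ext_on ((Set.finite_range μ).countable.dense_compl ℝ) ?_ ?_ ?_
  · fun_prop
  · refine .mul (by fun_prop) (.matrix_det (continuous_matrix fun i j => ?_))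
    simp only [of_apply]
    split_ifs <;> fun_prop
  · intro x hx
    simpa only [Fintype.card_fin] using
      det_smul_one_sub_blockDiagonal'_sub_smul_ones_mul_prod hrow γ fun i h => hx ⟨i, h.symm⟩

/-- For `M = diag(M₁, …, M_k)` with real symmetric blocks `Mᵢ` of size `nᵢ`
having constant row sums `μᵢ`, and any real `γ`,
`det(xI − M − γJ)·∏ᵢ(x − μᵢ) = ∏ᵢ det(xI − Mᵢ)·det(C)`, where `C` is the `k×k` matrix with
`C_{ii} = x − μᵢ − γnᵢ` and `C_{ij} = −γnⱼ` for `i ≠ j`. -/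
theorem stmt10 {k : ℕ} (nn : Fin k → ℕ)
    (M : ∀ i, Matrix (Fin (nn i)) (Fin (nn i)) ℝ)
    (hsymm : ∀ i, (M i).IsSymm)
    (μ : Fin k → ℝ) (γ : ℝ)
    (hrow : ∀ i, (M i) *ᵥ (fun _ => (1 : ℝ)) = μ i • (fun _ => (1 : ℝ)))
    (Mbd J : Matrix ((i : Fin k) × Fin (nn i)) ((i : Fin k) × Fin (nn i)) ℝ)
    (hMbd : Mbd = Matrix.blockDiagonal' M)
    (hJ : J = Matrix.of fun _ _ => (1 : ℝ)) :
    ∀ x : ℝ,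
      (x • (1 : Matrix ((i : Fin k) × Fin (nn i)) ((i : Fin k) × Fin (nn i)) ℝ) - Mbd - γ • J).det *
          ∏ i, (x - μ i) =
        (∏ i, (x • (1 : Matrix (Fin (nn i)) (Fin (nn i)) ℝ) - M i).det) *
          (Matrix.of fun i j : Fin k =>
            if i = j then x - μ i - γ * nn i else -γ * nn j).det :=
  stmt10_general nn M μ γ hrow Mbd J hMbd hJ
end
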